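/- arXiv:1107.1248 — 4 statements merged into one kernel-verified Lean document; each statement's English description precedes it below -/
import Mathlib

section
/- Let A be a positive self-adjoint operator on a complex Hilbert space H with dense domain D, and let (A_n)_{n∈ℕ} be a sequence of bounded positive operators on H which is nondecreasing in the Loewner order (⟨x, A_n x⟩ ≤ ⟨x, A_{n+1} x⟩ for all x ∈ H), satisfies ⟨x, A_n x⟩ ≤ ⟨x, A x⟩ for all x ∈ D, and converges weakly to A on D (⟨y, A_n x⟩ → ⟨y, A x⟩ for every x ∈ D and y ∈ H). Then each 1 + A_n has a bounded inverse, and the operators (1 + A_n)^{−1} converge strongly to a bounded operator R which satisfies R((1+A)x) = x for all x ∈ D and, for every y ∈ H, R y ∈ D with (1+A)(R y) = y; that is, the resolvents of the A_n at −1 converge strongly to the resolvent of A at −1. -/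
/-!
Since `B n` increases, the resolvents `C n = (1 + B n)⁻¹` form a decreasing sequence of positive
operators, and such a sequence converges strongly: for `m ≤ n` one has
`‖(C m - C n) x‖² ≤ ‖C 0‖ · re ⟪x, (C m - C n) x⟫`, and the quadratic forms `re ⟪x, C n x⟫`
decrease to a limit. For the strong limit `R`, pair `B n (C n y) = y - C n y` with `v ∈ dom A`:
the left side is `⟪C n y, B n v⟫`, a strongly convergent sequence against a weakly convergent
(hence, by Banach–Steinhaus, bounded) one, so `⟪y - R y, v⟫ = ⟪R y, A v⟫`. Thus `R y` lies in
`dom A† = dom A` with `(1 + A) (R y) = y`, and positivity of `A` makes `1 + A` injective, which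
gives `R ((1 + A) x) = x`.
-/

open scoped ComplexOrder InnerProductSpace
open Filter Topology

namespace ContinuousLinearMap

variable {H : Type*} [NormedAddCommGroup H] [InnerProductSpace ℂ H]

theorem isPositive_of_inner_nonneg {T : H →L[ℂ] H} (hT : ∀ x, 0 ≤ ⟪x, T x⟫_ℂ) :
    T.IsPositive := by
  have hreal : ∀ x, ⟪T x, x⟫_ℂ = ⟪x, T x⟫_ℂ := fun x => by
    rw [← inner_conj_symm]
    exact Complex.conj_eq_iff_im.mpr (Complex.nonneg_iff.mp (hT x)).2.symm
  refine (isPositive_iff T).mpr ⟨?_, fun x => hreal x ▸ hT x⟩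
  exact (LinearMap.isSymmetric_iff_inner_map_self_real _).mpr fun x => by
    rw [inner_conj_symm]; exact (hreal x).symm

theorem nonneg_of_inner_nonneg {T : H →L[ℂ] H} (hT : ∀ x, 0 ≤ ⟪x, T x⟫_ℂ) : 0 ≤ T :=
  (nonneg_iff_isPositive T).mpr (isPositive_of_inner_nonneg hT)

variable [CompleteSpace H]

theorem le_of_inner_le {S T : H →L[ℂ] H} (h : ∀ x, ⟪x, S x⟫_ℂ ≤ ⟪x, T x⟫_ℂ) : S ≤ T :=
  sub_nonneg.mp <| nonneg_of_inner_nonneg fun x => by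
    simpa only [sub_apply, inner_sub_right, sub_nonneg] using h x

theorem norm_apply_sq_le_of_nonneg {T : H →L[ℂ] H} (hT : 0 ≤ T) (x : H) :
    ‖T x‖ ^ 2 ≤ ‖T‖ * (⟪x, T x⟫_ℂ).re := by
  set S := CFC.sqrt T
  have hS : IsSelfAdjoint S := .of_nonneg (CFC.sqrt_nonneg T)
  have hSS : S * S = T := CFC.sqrt_mul_sqrt_self T hT
  have hnorm : ‖S‖ * ‖S‖ = ‖T‖ := by
    rw [← hSS, ← CStarRing.norm_star_mul_self, hS.star_eq]
  have hinner : (⟪x, T x⟫_ℂ).re = ‖S x‖ ^ 2 := by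
    rw [← hSS, show ⟪x, (S * S) x⟫_ℂ = ⟪S x, S x⟫_ℂ from (hS.isSymmetric x (S x)).symm,
      inner_self_eq_norm_sq_to_K]
    norm_cast
  calc ‖T x‖ ^ 2 = ‖S (S x)‖ ^ 2 := by rw [← hSS]; rfl
    _ ≤ (‖S‖ * ‖S x‖) ^ 2 := by gcongr; exact S.le_opNorm _
    _ = ‖T‖ * (⟪x, T x⟫_ℂ).re := by rw [hinner, ← hnorm]; ring

theorem cauchySeq_apply_of_antitone {C : ℕ → H →L[ℂ] H} (hC : Antitone C)
    (hC0 : ∀ n, 0 ≤ C n) (x : H) : CauchySeq fun n => C n x := by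
  set q : ℕ → ℝ := fun n => (⟪x, C n x⟫_ℂ).re
  have hq_sub : ∀ m n, (⟪x, (C m - C n) x⟫_ℂ).re = q m - q n := fun m n => by
    simp only [q, sub_apply, inner_sub_right, Complex.sub_re]
  have hq : Antitone q := fun m n h =>
    sub_nonneg.mp <| hq_sub m n ▸ ((le_def _ _).mp (hC h)).re_inner_nonneg_right x
  have hq0 : ∀ n, 0 ≤ q n := fun n =>
    ((nonneg_iff_isPositive _).mp (hC0 n)).re_inner_nonneg_right x
  have hqc : CauchySeq q :=
    (tendsto_atTop_ciInf hq ⟨0, Set.forall_mem_range.mpr hq0⟩).cauchySeq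
  have hsq : ∀ m n, m ≤ n → ‖C m x - C n x‖ ^ 2 ≤ ‖C 0‖ * (q m - q n) := fun m n hmn => by
    have hD : 0 ≤ C m - C n := sub_nonneg.mpr (hC hmn)
    have hDnorm : ‖C m - C n‖ ≤ ‖C 0‖ := CStarAlgebra.norm_le_norm_of_nonneg_of_le hD
      ((sub_le_self _ (hC0 n)).trans (hC (Nat.zero_le m)))
    have hqmn : 0 ≤ q m - q n := sub_nonneg.mpr (hq hmn)
    calc ‖C m x - C n x‖ ^ 2 = ‖(C m - C n) x‖ ^ 2 := rfl
      _ ≤ ‖C m - C n‖ * (⟪x, (C m - C n) x⟫_ℂ).re := norm_apply_sq_le_of_nonneg hD x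
      _ ≤ ‖C 0‖ * (q m - q n) := by rw [hq_sub]; gcongr
  rw [Metric.cauchySeq_iff'] at hqc ⊢
  intro ε hε
  obtain ⟨N, hN⟩ := hqc (ε ^ 2 / (‖C 0‖ + 1)) (by positivity)
  refine ⟨N, fun n hn => lt_of_pow_lt_pow_left₀ 2 hε.le ?_⟩
  have hqN := hN n hn
  rw [Real.dist_eq, abs_sub_comm, abs_of_nonneg (sub_nonneg.mpr (hq hn)),
    lt_div_iff₀ (by positivity)] at hqN
  rw [dist_comm, dist_eq_norm]
  nlinarith [hsq N n hn, sub_nonneg.mpr (hq hn)]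

theorem exists_tendsto_apply_of_antitone {C : ℕ → H →L[ℂ] H} (hC : Antitone C)
    (hC0 : ∀ n, 0 ≤ C n) : ∃ R : H →L[ℂ] H, ∀ x, Tendsto (fun n => C n x) atTop (𝓝 (R x)) := by
  choose f hf using fun x => cauchySeq_tendsto_of_complete (cauchySeq_apply_of_antitone hC hC0 x)
  exact ⟨continuousLinearMapOfTendsto C (tendsto_pi_nhds.mpr hf), hf⟩

end ContinuousLinearMap

section Hilbert

variable {𝕜 E : Type*} [RCLike 𝕜] [NormedAddCommGroup E] [InnerProductSpace 𝕜 E] [CompleteSpace E]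

theorem exists_norm_le_of_tendsto_inner {w : ℕ → E} {w₀ : E}
    (hw : ∀ y, Tendsto (fun n => ⟪y, w n⟫_𝕜) atTop (𝓝 ⟪y, w₀⟫_𝕜)) : ∃ M, ∀ n, ‖w n‖ ≤ M := by
  obtain ⟨M, hM⟩ := banach_steinhaus (g := fun n => innerSL 𝕜 (w n)) fun y => by
    obtain ⟨M, hM⟩ := (hw y).norm.bddAbove_range
    exact ⟨M, fun n => by simpa [norm_inner_symm] using hM ⟨n, rfl⟩⟩
  exact ⟨M, fun n => by simpa using hM n⟩

theorem tendsto_inner_of_tendsto_of_tendsto_inner {u w : ℕ → E} {u₀ w₀ : E}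
    (hu : Tendsto u atTop (𝓝 u₀)) (hw : ∀ y, Tendsto (fun n => ⟪y, w n⟫_𝕜) atTop (𝓝 ⟪y, w₀⟫_𝕜)) :
    Tendsto (fun n => ⟪u n, w n⟫_𝕜) atTop (𝓝 ⟪u₀, w₀⟫_𝕜) := by
  obtain ⟨M, hM⟩ := exists_norm_le_of_tendsto_inner hw
  have hsmall : Tendsto (fun n => ⟪u n - u₀, w n⟫_𝕜) atTop (𝓝 0) := by
    refine squeeze_zero_norm (fun n => (norm_inner_le_norm _ _).trans
      (mul_le_mul_of_nonneg_left (hM n) (norm_nonneg _))) ?_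
    simpa using (tendsto_iff_norm_sub_tendsto_zero.mp hu).mul_const M
  simpa [inner_sub_left] using hsmall.add (hw u₀)

theorem inner_sub_eq_inner_of_tendsto_resolvent {B C : ℕ → E →L[𝕜] E}
    (hB : ∀ n, IsSelfAdjoint (B n)) (hBC : ∀ n, (1 + B n) * C n = 1) {y r v w : E}
    (hr : Tendsto (fun n => C n y) atTop (𝓝 r))
    (hw : ∀ z, Tendsto (fun n => ⟪z, B n v⟫_𝕜) atTop (𝓝 ⟪z, w⟫_𝕜)) :
    ⟪y - r, v⟫_𝕜 = ⟪r, w⟫_𝕜 := by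
  have hBCy : ∀ n, B n (C n y) = y - C n y := fun n =>
    eq_sub_of_add_eq' (by simpa using congr($(hBC n) y))
  refine tendsto_nhds_unique ?_ (tendsto_inner_of_tendsto_of_tendsto_inner hr hw)
  refine ((tendsto_const_nhds.sub hr).inner tendsto_const_nhds).congr fun n => ?_
  rw [← hBCy]
  exact (hB n).isSymmetric _ _

theorem LinearPMap.exists_apply_eq_of_inner_eq {A : E →ₗ.[𝕜] E} (hA : IsSelfAdjoint A) {y w : E}
    (h : ∀ v : A.domain, ⟪w, v⟫_𝕜 = ⟪y, A v⟫_𝕜) : ∃ hy : y ∈ A.domain, A ⟨y, hy⟩ = w := by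
  have hy : y ∈ A.adjoint.domain := mem_adjoint_domain_of_exists y ⟨w, h⟩
  have hAy : A.adjoint ⟨y, hy⟩ = w := adjoint_apply_eq hA.dense_domain ⟨y, hy⟩ h
  rw [← isSelfAdjoint_def.mp hA]
  exact ⟨hy, hAy⟩

end Hilbert

namespace LinearPMap

variable {H : Type*} [NormedAddCommGroup H] [InnerProductSpace ℂ H]

theorem eq_zero_of_add_apply_eq_zero {A : H →ₗ.[ℂ] H}
    (hA : ∀ x : A.domain, 0 ≤ ⟪(x : H), A x⟫_ℂ) {x : A.domain} (hx : (x : H) + A x = 0) :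
    (x : H) = 0 := by
  have h := hA x
  rw [eq_neg_of_add_eq_zero_right hx, inner_neg_right, inner_self_eq_norm_sq_to_K,
    Left.nonneg_neg_iff] at h
  have h' : ‖(x : H)‖ ^ 2 ≤ 0 := Complex.real_le_real.mp (by push_cast; exact h)
  simpa using h'

theorem injective_add_apply_of_inner_nonneg {A : H →ₗ.[ℂ] H}
    (hA : ∀ x : A.domain, 0 ≤ ⟪(x : H), A x⟫_ℂ) :
    Function.Injective fun x : A.domain => (x : H) + A x := by
  intro p q (hpq : (p : H) + A p = q + A q)
  have hd : ((p - q : A.domain) : H) + A (p - q) = 0 := by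
    rw [A.map_sub, Submodule.coe_sub, sub_add_sub_comm, hpq, sub_self]
  exact sub_eq_zero.mp (Subtype.ext (eq_zero_of_add_apply_eq_zero hA hd))

end LinearPMap

theorem resolvent_strong_convergence_general
    {H : Type*} [NormedAddCommGroup H] [InnerProductSpace ℂ H] [CompleteSpace H]
    (A : H →ₗ.[ℂ] H)
    (hAsa : IsSelfAdjoint A)
    (hApos : ∀ x : A.domain, 0 ≤ (inner ℂ (x : H) (A x) : ℂ))
    (B : ℕ → H →L[ℂ] H)
    (hBpos : ∀ n, ∀ x : H, 0 ≤ (inner ℂ x (B n x) : ℂ))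
    (hBmono : ∀ n, ∀ x : H, (inner ℂ x (B n x) : ℂ) ≤ (inner ℂ x (B (n + 1) x) : ℂ))
    (hBweak : ∀ x : A.domain, ∀ y : H,
      Filter.Tendsto (fun n => (inner ℂ y (B n ↑x) : ℂ)) Filter.atTop (nhds (inner ℂ y (A x)))) :
    (∀ n, ∃ C : H →L[ℂ] H, C * (1 + B n) = 1 ∧ (1 + B n) * C = 1) ∧
    ∃ R : H →L[ℂ] H,
      (∀ C : ℕ → H →L[ℂ] H, (∀ n, C n * (1 + B n) = 1 ∧ (1 + B n) * C n = 1) →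
        ∀ y : H, Filter.Tendsto (fun n => C n y) Filter.atTop (nhds (R y))) ∧
      (∀ x : A.domain, R ((x : H) + A x) = (x : H)) ∧
      (∀ y : H, ∃ hy : R y ∈ A.domain, R y + A ⟨R y, hy⟩ = y) := by
  have hB : Monotone B :=
    monotone_nat_of_le_succ fun n => ContinuousLinearMap.le_of_inner_le (hBmono n)
  have hpos : ∀ n, IsStrictlyPositive (1 + B n) := fun n =>
    isStrictlyPositive_one.add_nonneg (ContinuousLinearMap.nonneg_of_inner_nonneg (hBpos n))
  set C : ℕ → H →L[ℂ] H := fun n => Ring.inverse (1 + B n)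
  have hC : ∀ n, C n * (1 + B n) = 1 ∧ (1 + B n) * C n = 1 := fun n =>
    ⟨Ring.inverse_mul_cancel _ (hpos n).isUnit, Ring.mul_inverse_cancel _ (hpos n).isUnit⟩
  obtain ⟨R, hR⟩ := ContinuousLinearMap.exists_tendsto_apply_of_antitone (C := C)
    (fun m n h => CStarAlgebra.ringInverse_le_ringInverse (add_le_add_right (hB h) 1) (hpos m))
    (fun n => (hpos n).ringInverse.nonneg)
  have hRange : ∀ y, ∃ hy : R y ∈ A.domain, R y + A ⟨R y, hy⟩ = y := fun y => by
    obtain ⟨hy, hAy⟩ := LinearPMap.exists_apply_eq_of_inner_eq hAsa fun v =>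
      inner_sub_eq_inner_of_tendsto_resolvent
        (fun n => (ContinuousLinearMap.isPositive_of_inner_nonneg (hBpos n)).isSelfAdjoint)
        (fun n => (hC n).2) (hR y) (hBweak v)
    exact ⟨hy, by rw [hAy, add_sub_cancel]⟩
  refine ⟨fun n => ⟨C n, hC n⟩, R, fun C' hC' y => ?_, fun x => ?_, hRange⟩
  · simpa only [fun n => left_inv_eq_right_inv (hC' n).1 (hC n).2] using hR y
  · obtain ⟨hy, hRx⟩ := hRange ((x : H) + A x)
    exact congrArg Subtype.val
      (LinearPMap.injective_add_apply_of_inner_nonneg hApos (a₁ := ⟨_, hy⟩) hRx)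

/-- Let `A` be a positive self-adjoint (unbounded) operator on a complex
Hilbert space `H` with dense domain, and `(B n)` a sequence of bounded positive operators,
nondecreasing in the Loewner order, dominated by `A` on the domain, and converging weakly
to `A` on the domain.  Then each `1 + B n` has a bounded inverse, and these inverses
converge strongly to a bounded operator `R` which is the resolvent of `A` at `-1`:
`R ((1+A)x) = x` on the domain and `(1+A)(R y) = y` for all `y`. -/
theorem resolvent_strong_convergence
    {H : Type*} [NormedAddCommGroup H] [InnerProductSpace ℂ H] [CompleteSpace H]
    (A : H →ₗ.[ℂ] H) (hAdense : Dense (A.domain : Set H))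
    (hAsa : IsSelfAdjoint A)
    (hApos : ∀ x : A.domain, 0 ≤ (inner ℂ (x : H) (A x) : ℂ))
    (B : ℕ → H →L[ℂ] H)
    (hBpos : ∀ n, ∀ x : H, 0 ≤ (inner ℂ x (B n x) : ℂ))
    (hBmono : ∀ n, ∀ x : H, (inner ℂ x (B n x) : ℂ) ≤ (inner ℂ x (B (n + 1) x) : ℂ))
    (hBle : ∀ n, ∀ x : A.domain, (inner ℂ (x : H) (B n ↑x) : ℂ) ≤ (inner ℂ (x : H) (A x) : ℂ))
    (hBweak : ∀ x : A.domain, ∀ y : H,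
      Filter.Tendsto (fun n => (inner ℂ y (B n ↑x) : ℂ)) Filter.atTop (nhds (inner ℂ y (A x)))) :
    (∀ n, ∃ C : H →L[ℂ] H, C * (1 + B n) = 1 ∧ (1 + B n) * C = 1) ∧
    ∃ R : H →L[ℂ] H,
      (∀ C : ℕ → H →L[ℂ] H, (∀ n, C n * (1 + B n) = 1 ∧ (1 + B n) * C n = 1) →
        ∀ y : H, Filter.Tendsto (fun n => C n y) Filter.atTop (nhds (R y))) ∧
      (∀ x : A.domain, R ((x : H) + A x) = (x : H)) ∧
      (∀ y : H, ∃ hy : R y ∈ A.domain, R y + A ⟨R y, hy⟩ = y) :=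
  resolvent_strong_convergence_general A hAsa hApos B hBpos hBmono hBweak
end

section
/- Let 𝔄 be a unital C*-algebra and φ a state on 𝔄. Suppose there is a directed family (𝔄_i)_{i∈I} of closed unital *-subalgebras of 𝔄 (I directed and i ≤ j implies 𝔄_i ⊆ 𝔄_j) whose union is dense in 𝔄, together with linear maps E_i : 𝔄 → 𝔄 such that for each i: (a) E_i is positive (a ≥ 0 implies E_i(a) ≥ 0) and contractive (‖E_i(a)‖ ≤ ‖a‖ for all a), (b) the range of E_i is contained in 𝔄_i and E_i(a) = a for all a ∈ 𝔄_i, (c) φ ∘ E_i = φ, and (d) the restriction of φ to 𝔄_i is faithful. Then φ is faithful on 𝔄: if a ≥ 0 and φ(a) = 0 then a = 0. -/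
open scoped ComplexOrder

/-!
Faithfulness of `φ` on each `𝔄_i`, together with `φ ∘ E_i = φ` and positivity of `E_i`, forces
`E_i a = 0` whenever `a ≥ 0` and `φ a = 0`. For `b ∈ 𝔄_i` the contraction `E_i` then sends
`b - a` to `b`, so `‖b‖ ≤ ‖a - b‖` and `‖a‖ ≤ 2 ‖a - b‖`. As `b` ranges over the dense union of
the `𝔄_i`, this gives `‖a‖ = 0`.
-/

lemma norm_le_two_mul_norm_sub_of_contraction {E F : Type*} [SeminormedAddCommGroup E]
    [FunLike F E E] [AddMonoidHomClass F E E] (T : F) (hT : ∀ x, ‖T x‖ ≤ ‖x‖) {a b : E}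
    (ha : T a = 0) (hb : T b = b) : ‖a‖ ≤ 2 * ‖a - b‖ := by
  have hb_le : ‖b‖ ≤ ‖a - b‖ := by
    simpa only [map_sub, ha, hb, sub_zero, norm_sub_rev b a] using hT (b - a)
  calc ‖a‖ = ‖(a - b) + b‖ := by rw [sub_add_cancel]
    _ ≤ ‖a - b‖ + ‖b‖ := norm_add_le _ _
    _ ≤ 2 * ‖a - b‖ := by linarith

lemma eq_zero_of_dense_of_norm_le_mul_norm_sub {E : Type*} [NormedAddCommGroup E] {D : Set E}
    (hD : Dense D) {a : E} (C : ℝ) (h : ∀ b ∈ D, ‖a‖ ≤ C * ‖a - b‖) : a = 0 := by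
  have hclosed : IsClosed {b : E | ‖a‖ ≤ C * ‖a - b‖} :=
    isClosed_le continuous_const (continuous_const.mul (continuous_const.sub continuous_id).norm)
  have ha : ‖a‖ ≤ C * ‖a - a‖ := by
    have := closure_minimal h hclosed
    rw [hD.closure_eq] at this
    exact this (Set.mem_univ a)
  simpa only [sub_self, norm_zero, mul_zero, norm_le_zero_iff] using ha

theorem state_faithful_of_conditional_expectations_general
    {𝔄 : Type*} [NormedRing 𝔄] [StarRing 𝔄]
    [NormedAlgebra ℂ 𝔄] [StarModule ℂ 𝔄] [PartialOrder 𝔄]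
    (φ : 𝔄 →ₗ[ℂ] ℂ)
    {I : Type*}
    (S : I → StarSubalgebra ℂ 𝔄)
    (hSdense : Dense (⋃ i, (S i : Set 𝔄)))
    (E : I → (𝔄 →ₗ[ℂ] 𝔄))
    (hEpos : ∀ i, ∀ a : 𝔄, 0 ≤ a → 0 ≤ E i a)
    (hEcontr : ∀ i, ∀ a : 𝔄, ‖E i a‖ ≤ ‖a‖)
    (hErange : ∀ i, ∀ a, E i a ∈ S i)
    (hEid : ∀ i, ∀ a ∈ S i, E i a = a)
    (hEinv : ∀ i, ∀ a, φ (E i a) = φ a)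
    (hfaith : ∀ i, ∀ a ∈ S i, 0 ≤ a → φ a = 0 → a = 0) :
    ∀ a : 𝔄, 0 ≤ a → φ a = 0 → a = 0 := by
  intro a ha hφa
  have hEa : ∀ i, E i a = 0 := fun i =>
    hfaith i _ (hErange i a) (hEpos i a ha) (by rw [hEinv, hφa])
  refine eq_zero_of_dense_of_norm_le_mul_norm_sub hSdense 2 fun b hb => ?_
  obtain ⟨i, hbi⟩ := Set.mem_iUnion.mp hb
  exact norm_le_two_mul_norm_sub_of_contraction (E i) (hEcontr i) (hEa i) (hEid i b hbi)

/-- Let `𝔄` be a unital C*-algebra and `φ` a state on `𝔄`.  Suppose there is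
a directed family of closed unital *-subalgebras `S i` with dense union, together with linear
maps `E i : 𝔄 → 𝔄` which are positive and contractive, have range in `S i`, restrict to the
identity on `S i`, satisfy `φ ∘ E i = φ`, and such that `φ` is faithful on each `S i`.
Then `φ` is faithful on `𝔄`. -/
theorem state_faithful_of_conditional_expectations
    {𝔄 : Type*} [NormedRing 𝔄] [StarRing 𝔄] [CStarRing 𝔄] [CompleteSpace 𝔄]
    [NormedAlgebra ℂ 𝔄] [StarModule ℂ 𝔄] [PartialOrder 𝔄] [StarOrderedRing 𝔄]
    (φ : 𝔄 →ₗ[ℂ] ℂ) (hφ1 : φ 1 = 1) (hφpos : ∀ a : 𝔄, 0 ≤ a → 0 ≤ φ a)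
    {I : Type*} [Preorder I] (hIdir : ∀ i j : I, ∃ k, i ≤ k ∧ j ≤ k)
    (S : I → StarSubalgebra ℂ 𝔄)
    (hSmono : ∀ i j, i ≤ j → S i ≤ S j)
    (hSclosed : ∀ i, IsClosed (S i : Set 𝔄))
    (hSdense : Dense (⋃ i, (S i : Set 𝔄)))
    (E : I → (𝔄 →ₗ[ℂ] 𝔄))
    (hEpos : ∀ i, ∀ a : 𝔄, 0 ≤ a → 0 ≤ E i a)
    (hEcontr : ∀ i, ∀ a : 𝔄, ‖E i a‖ ≤ ‖a‖)
    (hErange : ∀ i, ∀ a, E i a ∈ S i)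
    (hEid : ∀ i, ∀ a ∈ S i, E i a = a)
    (hEinv : ∀ i, ∀ a, φ (E i a) = φ a)
    (hfaith : ∀ i, ∀ a ∈ S i, 0 ≤ a → φ a = 0 → a = 0) :
    ∀ a : 𝔄, 0 ≤ a → φ a = 0 → a = 0 :=
  state_faithful_of_conditional_expectations_general φ S hSdense E hEpos hEcontr hErange hEid hEinv
    hfaith
end

section
/- The Gibbs state ρ satisfies: (i) ρ(a_k) = 0, ρ(a_kᴴ) = 0 and ρ(n_k) = 1/(1 + e^{β(ε_k − μ)}) for every site k ∈ Fin n; (ii) ρ factorizes over sites: if for each k ∈ Fin n the matrix A_k lies in the linear span of {1, a_k, a_kᴴ, n_k}, then ρ(A_0 A_1 ⋯ A_{n−1}) = ∏_{k} ρ(A_k), the product of the A_k being taken in increasing order of sites. -/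
open Matrix

noncomputable section JW

/-- The operator algebra of `n` fermionic sites: `2^n × 2^n` complex matrices, with the
index set realized as `Fin n → Fin 2` (the tensor-product basis). -/
abbrev FermionAlg (n : ℕ) := Matrix (Fin n → Fin 2) (Fin n → Fin 2) ℂ

/-- Jordan–Wigner annihilation operator at site `k`:
`a_k = σ₃^{⊗ k} ⊗ σ⁻ ⊗ 1₂^{⊗ (n−k−1)}`, with `σ⁻ = [[0,0],[1,0]]` and
`σ₃ = [[1,0],[0,−1]]`, written entrywise in the tensor-product basis
(the entry of a tensor product at `(v, w)` is the product of the entries of the factors). -/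
def jwA (n : ℕ) (k : Fin n) : FermionAlg n :=
  Matrix.of fun v w => ∏ j : Fin n,
    if j < k then (if v j = w j then (-1 : ℂ) ^ (v j : ℕ) else 0)
    else if j = k then (if v j = 1 ∧ w j = 0 then 1 else 0)
    else (if v j = w j then 1 else 0)

/-- The number operator `n_k = a_kᴴ a_k`. -/
def numOp (n : ℕ) (k : Fin n) : FermionAlg n := (jwA n k)ᴴ * jwA n k

/-- The grading unitary `G = ∏_k (1 − 2 n_k)`. -/
def grading (n : ℕ) : FermionAlg n :=
  (List.ofFn fun k : Fin n => (1 - 2 • numOp n k)).prod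

/-- The free energy `F = Σ_k (ε_k − μ) n_k`. -/
def freeEnergy (n : ℕ) (ε : Fin n → ℝ) (μ : ℝ) : FermionAlg n :=
  ∑ k, ((ε k - μ : ℝ) : ℂ) • numOp n k

/-- The Gibbs state `ρ(A) = Tr(exp(−βF)·A)/Tr(exp(−βF))`. -/
def gibbs (n : ℕ) (ε : Fin n → ℝ) (μ β : ℝ) (A : FermionAlg n) : ℂ :=
  ((NormedSpace.exp ((-(β : ℂ)) • freeEnergy n ε μ)) * A).trace /
    (NormedSpace.exp ((-(β : ℂ)) • freeEnergy n ε μ)).trace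

end JW

/-!
The free energy is diagonal in the occupation basis, so `exp (-βF)` is diagonal with entries
`∏ₖ wₖ (v k)` and `ρ (A)` is the mean of the diagonal of `A` under a product measure on
configurations `v`. Each of `1, a_k, a_kᴴ, n_k` changes a configuration at most at site `k`, and
its diagonal depends only on the occupation of site `k`. In a product of such operators attached
to distinct sites, a path from `v` back to `v` cannot change any site (only one factor acts on
it), so the diagonal of the product is the product of the diagonals, a product of independent
functions of the sites, whose mean factorizes.
-/

namespace Matrix

variable {ι α R : Type*}

section Semiring

variable [Semiring R]

def flipsOnlyOn (S : Set ι) : Submodule R (Matrix (ι → α) (ι → α) R) where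
  carrier := {A | ∀ v w, (∃ j ∉ S, v j ≠ w j) → A v w = 0}
  add_mem' hA hB v w h := by rw [add_apply, hA v w h, hB v w h, add_zero]
  zero_mem' _ _ _ := rfl
  smul_mem' c A hA v w h := by rw [smul_apply, hA v w h, smul_zero]

theorem conjTranspose_mem_flipsOnlyOn [StarRing R] {S : Set ι}
    {A : Matrix (ι → α) (ι → α) R} (hA : A ∈ flipsOnlyOn S) : Aᴴ ∈ flipsOnlyOn S :=
  fun v w ⟨j, hj, hvw⟩ => by rw [conjTranspose_apply, hA w v ⟨j, hj, hvw.symm⟩, star_zero]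

variable [Fintype ι]

section

variable [DecidableEq α]

theorem one_mem_flipsOnlyOn (S : Set ι) : (1 : Matrix (ι → α) (ι → α) R) ∈ flipsOnlyOn S :=
  fun _ _ ⟨j, _, hj⟩ => one_apply_ne fun h => hj (congrFun h j)

theorem diagonal_mem_flipsOnlyOn (S : Set ι) (d : (ι → α) → R) : diagonal d ∈ flipsOnlyOn S :=
  fun _ _ ⟨j, _, hj⟩ => diagonal_apply_ne _ fun h => hj (congrFun h j)

end

variable [DecidableEq ι] [Fintype α]

theorem mul_mem_flipsOnlyOn_union {S T : Set ι} {A B : Matrix (ι → α) (ι → α) R}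
    (hA : A ∈ flipsOnlyOn S) (hB : B ∈ flipsOnlyOn T) : A * B ∈ flipsOnlyOn (S ∪ T) := by
  rintro v w ⟨j, hj, hvw⟩
  rw [Set.mem_union, not_or] at hj
  refine Finset.sum_eq_zero fun u _ => show A v u * B u w = 0 from ?_
  by_cases hvu : v j = u j
  · rw [hB u w ⟨j, hj.2, hvu ▸ hvw⟩, mul_zero]
  · rw [hA v u ⟨j, hj.1, hvu⟩, zero_mul]

/-- Only the intermediate configuration `u = v` contributes to `(A * B) v v`: `A` can change `v`
only inside `S` and `B` can change it back only inside `T`. -/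
theorem mul_apply_self_of_disjoint {S T : Set ι} (hST : Disjoint S T)
    {A B : Matrix (ι → α) (ι → α) R} (hA : A ∈ flipsOnlyOn S) (hB : B ∈ flipsOnlyOn T)
    (v : ι → α) : (A * B) v v = A v v * B v v := by
  refine Finset.sum_eq_single v (fun u _ huv => show A v u * B u v = 0 from ?_) (by simp)
  obtain ⟨j, hj⟩ := Function.ne_iff.mp huv
  by_cases hjS : j ∈ S
  · rw [hB u v ⟨j, hST.notMem_of_mem_left hjS, hj⟩, mul_zero]
  · rw [hA v u ⟨j, hjS, fun h => hj h.symm⟩, zero_mul]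

variable [DecidableEq α]

theorem list_prod_mem_flipsOnlyOn {l : List ι} {A : ι → Matrix (ι → α) (ι → α) R}
    (hA : ∀ k ∈ l, A k ∈ flipsOnlyOn {k}) : (l.map A).prod ∈ flipsOnlyOn {k | k ∈ l} := by
  induction l with
  | nil => exact one_mem_flipsOnlyOn _
  | cons k l ih =>
    have h := mul_mem_flipsOnlyOn_union (hA k List.mem_cons_self)
      (ih fun j hj => hA j (List.mem_cons_of_mem k hj))
    rw [List.map_cons, List.prod_cons]
    convert h using 2
    ext
    simp

theorem list_prod_apply_self {l : List ι} (hl : l.Nodup) {A : ι → Matrix (ι → α) (ι → α) R}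
    (hA : ∀ k ∈ l, A k ∈ flipsOnlyOn {k}) (v : ι → α) :
    (l.map A).prod v v = (l.map fun k => A k v v).prod := by
  induction l with
  | nil => exact one_apply_eq v
  | cons k l ih =>
    rw [List.nodup_cons] at hl
    have hl' : ∀ j ∈ l, A j ∈ flipsOnlyOn {j} := fun j hj => hA j (List.mem_cons_of_mem k hj)
    rw [List.map_cons, List.prod_cons, mul_apply_self_of_disjoint (T := {j | j ∈ l})
      (Set.disjoint_singleton_left.mpr hl.1) (hA k List.mem_cons_self)
      (list_prod_mem_flipsOnlyOn hl'), ih hl.2 hl', List.map_cons, List.prod_cons]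

end Semiring

section CommSemiring

variable [CommSemiring R]

theorem list_ofFn_prod_apply_self [Fintype α] [DecidableEq α] {m : ℕ}
    {A : Fin m → Matrix (Fin m → α) (Fin m → α) R} (hA : ∀ k, A k ∈ flipsOnlyOn {k})
    (v : Fin m → α) : (List.ofFn A).prod v v = ∏ k, A k v v := by
  rw [List.ofFn_eq_map, list_prod_apply_self (List.nodup_finRange m) (fun k _ => hA k),
    ← List.ofFn_eq_map, List.prod_ofFn]

def diagDependsOnlyOn (k : ι) : Submodule R (Matrix (ι → α) (ι → α) R) where
  carrier := {A | ∀ v w, v k = w k → A v v = A w w}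
  add_mem' hA hB v w h := by rw [add_apply, add_apply, hA v w h, hB v w h]
  zero_mem' _ _ _ := rfl
  smul_mem' c A hA v w h := by rw [smul_apply, smul_apply, hA v w h]

variable [Fintype ι]

def piTensor (m : ι → Matrix α α R) : Matrix (ι → α) (ι → α) R :=
  of fun v w => ∏ i, m i (v i) (w i)

theorem piTensor_apply (m : ι → Matrix α α R) (v w : ι → α) :
    piTensor m v w = ∏ i, m i (v i) (w i) := rfl

theorem piTensor_mem_flipsOnlyOn {S : Set ι} {m : ι → Matrix α α R}
    (hm : ∀ i ∉ S, (m i).IsDiag) : piTensor m ∈ flipsOnlyOn S :=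
  fun _ _ ⟨j, hj, hvw⟩ => Finset.prod_eq_zero (Finset.mem_univ j) (hm j hj hvw)

theorem conjTranspose_piTensor [StarRing R] (m : ι → Matrix α α R) :
    (piTensor m)ᴴ = piTensor fun i => (m i)ᴴ := by
  ext v w
  simp only [conjTranspose_apply, piTensor_apply, star_prod]

theorem piTensor_diagonal [DecidableEq α] (d : ι → α → R) :
    piTensor (fun i => diagonal (d i)) = diagonal fun v => ∏ i, d i (v i) := by
  ext v w
  by_cases hvw : v = w
  · subst hvw
    simp [piTensor_apply]
  · obtain ⟨j, hj⟩ := Function.ne_iff.mp hvw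
    rw [diagonal_apply_ne _ hvw, piTensor_apply]
    exact Finset.prod_eq_zero (Finset.mem_univ j) (diagonal_apply_ne _ hj)

theorem piTensor_mul_piTensor [DecidableEq ι] [Fintype α] (m m' : ι → Matrix α α R) :
    piTensor m * piTensor m' = piTensor fun i => m i * m' i := by
  ext v w
  simp only [mul_apply, piTensor_apply, ← Finset.prod_mul_distrib]
  exact (Fintype.prod_sum fun i x => m i (v i) x * m' i x (w i)).symm

end CommSemiring

end Matrix

theorem Finset.sum_pi_prod_mul_prod_div {ι α K : Type*} [Fintype ι] [DecidableEq ι] [Fintype α]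
    [Field K] (w f : ι → α → K) :
    (∑ v : ι → α, (∏ i, w i (v i)) * ∏ i, f i (v i)) / ∑ v : ι → α, ∏ i, w i (v i) =
      ∏ i, (∑ x, w i x * f i x) / ∑ x, w i x := by
  simp only [Finset.prod_div_distrib, Fintype.prod_sum, Finset.prod_mul_distrib]

open Matrix

noncomputable section

variable {n : ℕ}

def sigmaMinus : Matrix (Fin 2) (Fin 2) ℂ := !![0, 0; 1, 0]

def sigmaZ : Matrix (Fin 2) (Fin 2) ℂ := diagonal ![1, -1]

/-- The basis state `0` is the occupied one, since `σ⁻ᴴ σ⁻ = !![1, 0; 0, 0]`. -/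
def occupation (x : Fin 2) : ℂ := if x = 0 then 1 else 0

theorem conjTranspose_sigmaMinus_mul_self : sigmaMinusᴴ * sigmaMinus = diagonal occupation := by
  ext x y
  fin_cases x <;> fin_cases y <;> simp [sigmaMinus, occupation, mul_apply, Fin.sum_univ_two]

theorem conjTranspose_sigmaZ_mul_self : sigmaZᴴ * sigmaZ = 1 := by
  ext x y
  fin_cases x <;> fin_cases y <;> simp [sigmaZ, mul_apply, Fin.sum_univ_two]

def jwFactor (k j : Fin n) : Matrix (Fin 2) (Fin 2) ℂ :=
  if j < k then sigmaZ else if j = k then sigmaMinus else 1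

theorem jwA_eq_piTensor (k : Fin n) : jwA n k = piTensor (jwFactor k) := by
  ext v w
  rw [jwA, of_apply, piTensor_apply]
  refine Finset.prod_congr rfl fun j _ => ?_
  generalize v j = x, w j = y
  unfold jwFactor
  fin_cases x <;> fin_cases y <;> simp only <;> split_ifs <;> simp_all [sigmaZ, sigmaMinus]

theorem jwA_mem_flipsOnlyOn (k : Fin n) : jwA n k ∈ flipsOnlyOn {k} := by
  rw [jwA_eq_piTensor]
  refine piTensor_mem_flipsOnlyOn fun j hj => ?_
  rw [Set.mem_singleton_iff] at hj
  unfold jwFactor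
  rw [if_neg hj]
  split_ifs
  · exact isDiag_diagonal _
  · exact isDiag_one

theorem jwA_apply_self (k : Fin n) (v : Fin n → Fin 2) : jwA n k v v = 0 := by
  rw [jwA_eq_piTensor, piTensor_apply]
  refine Finset.prod_eq_zero (Finset.mem_univ k) ?_
  simp only [jwFactor, lt_irrefl, if_false, if_true]
  generalize v k = x
  fin_cases x <;> rfl

theorem conjTranspose_jwFactor_mul_self (k j : Fin n) :
    (jwFactor k j)ᴴ * jwFactor k j = diagonal (if j = k then occupation else 1) := by
  unfold jwFactor
  split_ifs with hlt heq heq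
  · exact absurd hlt (heq ▸ lt_irrefl j)
  · exact conjTranspose_sigmaZ_mul_self.trans diagonal_one.symm
  · exact conjTranspose_sigmaMinus_mul_self
  · rw [conjTranspose_one, one_mul]
    exact diagonal_one.symm

theorem numOp_eq_diagonal (k : Fin n) : numOp n k = diagonal fun v => occupation (v k) := by
  rw [numOp, jwA_eq_piTensor, conjTranspose_piTensor, piTensor_mul_piTensor]
  simp only [conjTranspose_jwFactor_mul_self, piTensor_diagonal]
  congr 1
  ext v
  simp [ite_apply]

theorem span_jw_le_flipsOnlyOn_inf_diagDependsOnlyOn (k : Fin n) :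
    Submodule.span ℂ ({1, jwA n k, (jwA n k)ᴴ, numOp n k} : Set (FermionAlg n)) ≤
      flipsOnlyOn {k} ⊓ diagDependsOnlyOn k := by
  simp only [Submodule.span_le, Set.insert_subset_iff, Set.singleton_subset_iff,
    SetLike.mem_coe, Submodule.mem_inf]
  refine ⟨⟨one_mem_flipsOnlyOn _, fun v w _ => by rw [one_apply_eq, one_apply_eq]⟩,
    ⟨jwA_mem_flipsOnlyOn k, fun v w _ => by rw [jwA_apply_self, jwA_apply_self]⟩,
    ⟨conjTranspose_mem_flipsOnlyOn (jwA_mem_flipsOnlyOn k),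
      fun v w _ => by simp only [conjTranspose_apply, jwA_apply_self]⟩, ?_⟩
  rw [numOp_eq_diagonal]
  exact ⟨diagonal_mem_flipsOnlyOn _ _, fun v w h => by simp only [diagonal_apply_eq, h]⟩

variable (ε : Fin n → ℝ) (μ β : ℝ)

def boltzmannWeight (k : Fin n) (x : Fin 2) : ℂ :=
  Complex.exp (-β * (ε k - μ : ℝ) * occupation x)

def siteMean (k : Fin n) (f : Fin 2 → ℂ) : ℂ :=
  (∑ x, boltzmannWeight ε μ β k x * f x) / ∑ x, boltzmannWeight ε μ β k x

theorem freeEnergy_eq_diagonal :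
    freeEnergy n ε μ = diagonal fun v => ∑ k, ((ε k - μ : ℝ) : ℂ) * occupation (v k) := by
  ext v w
  by_cases hvw : v = w <;> simp [freeEnergy, numOp_eq_diagonal, hvw, Matrix.sum_apply]

theorem exp_neg_smul_freeEnergy :
    NormedSpace.exp ((-(β : ℂ)) • freeEnergy n ε μ) =
      diagonal fun v => ∏ k, boltzmannWeight ε μ β k (v k) := by
  rw [freeEnergy_eq_diagonal, ← diagonal_smul, exp_diagonal]
  congr 1
  funext v
  simp only [Pi.coe_exp, Pi.smul_apply, smul_eq_mul, ← Complex.exp_eq_exp_ℂ, Finset.mul_sum,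
    Complex.exp_sum, boltzmannWeight, mul_assoc]

theorem gibbs_eq_prod_siteMean {A : FermionAlg n} (f : Fin n → Fin 2 → ℂ)
    (hA : ∀ v, A v v = ∏ k, f k (v k)) :
    gibbs n ε μ β A = ∏ k, siteMean ε μ β k (f k) := by
  rw [gibbs, exp_neg_smul_freeEnergy, trace_diagonal]
  simp only [trace, diag_apply, diagonal_mul, hA]
  exact Finset.sum_pi_prod_mul_prod_div _ _

theorem sum_boltzmannWeight (k : Fin n) :
    ∑ x, boltzmannWeight ε μ β k x = ((Real.exp (-(β * (ε k - μ))) + 1 : ℝ) : ℂ) := by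
  simp [boltzmannWeight, occupation]

theorem siteMean_one (k : Fin n) : siteMean ε μ β k (fun _ => 1) = 1 := by
  simp only [siteMean, mul_one]
  exact div_self (by rw [sum_boltzmannWeight, Complex.ofReal_ne_zero]; positivity)

theorem gibbs_eq_siteMean {A : FermionAlg n} {k : Fin n} (f : Fin 2 → ℂ)
    (hA : ∀ v, A v v = f (v k)) : gibbs n ε μ β A = siteMean ε μ β k f := by
  rw [gibbs_eq_prod_siteMean ε μ β (fun j x => if j = k then f x else 1) (fun v => by simp [hA]),
    Finset.prod_eq_single k (fun j _ hj => by simp [hj, siteMean_one]) (by simp)]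
  simp

theorem siteMean_occupation (k : Fin n) :
    siteMean ε μ β k occupation = ((1 / (1 + Real.exp (β * (ε k - μ))) : ℝ) : ℂ) := by
  have hnum : ∑ x, boltzmannWeight ε μ β k x * occupation x = Real.exp (-(β * (ε k - μ))) := by
    simp [boltzmannWeight, occupation]
  rw [siteMean, sum_boltzmannWeight, hnum, ← Complex.ofReal_div, Real.exp_neg]
  congr 1
  field_simp

end

theorem gibbs_state_values_and_factorization_general
    (n : ℕ) (β μ : ℝ) (ε : Fin n → ℝ) :
    (∀ k : Fin n, gibbs n ε μ β (jwA n k) = 0) ∧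
    (∀ k : Fin n, gibbs n ε μ β (jwA n k)ᴴ = 0) ∧
    (∀ k : Fin n, gibbs n ε μ β (numOp n k)
      = ((1 / (1 + Real.exp (β * (ε k - μ))) : ℝ) : ℂ)) ∧
    (∀ A : Fin n → FermionAlg n,
      (∀ k : Fin n, A k ∈ Submodule.span ℂ
        ({1, jwA n k, (jwA n k)ᴴ, numOp n k} : Set (FermionAlg n))) →
      gibbs n ε μ β (List.ofFn A).prod = ∏ k : Fin n, gibbs n ε μ β (A k)) := by
  refine ⟨fun k => ?_, fun k => ?_, fun k => ?_, fun A hA => ?_⟩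
  · rw [gibbs_eq_siteMean ε μ β (k := k) 0 (jwA_apply_self k)]
    simp [siteMean]
  · rw [gibbs_eq_siteMean ε μ β (k := k) 0 fun v => by rw [conjTranspose_apply, jwA_apply_self, star_zero, Pi.zero_apply]]
    simp [siteMean]
  · rw [gibbs_eq_siteMean ε μ β occupation fun v => by rw [numOp_eq_diagonal, diagonal_apply_eq],
      siteMean_occupation]
  have hloc k := span_jw_le_flipsOnlyOn_inf_diagDependsOnlyOn k (hA k)
  have hdiag k (v : Fin n → Fin 2) : A k v v = A k (fun _ => v k) (fun _ => v k) :=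
    (hloc k).2 v _ rfl
  rw [gibbs_eq_prod_siteMean ε μ β (fun k x => A k (fun _ => x) (fun _ => x)) fun v => by
    rw [list_ofFn_prod_apply_self fun k => (hloc k).1]
    exact Finset.prod_congr rfl fun k _ => hdiag k v]
  exact Finset.prod_congr rfl fun k _ => (gibbs_eq_siteMean ε μ β _ (hdiag k)).symm

/-- The Gibbs state `ρ` for the free energy `F = Σ_k (ε_k − μ) n_k`
satisfies (i) `ρ(a_k) = 0`, `ρ(a_kᴴ) = 0` and `ρ(n_k) = 1/(1 + e^{β(ε_k − μ)})` for every
site `k`, and (ii) it factorizes over sites: if each `A k` lies in the span of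
`{1, a_k, a_kᴴ, n_k}`, then `ρ(A_0 A_1 ⋯ A_{n−1}) = ∏_k ρ(A_k)` (the product of the `A_k`
being taken in increasing order of sites). -/
theorem gibbs_state_values_and_factorization
    (n : ℕ) (hn : 1 ≤ n) (β μ : ℝ) (hβ : 0 < β) (ε : Fin n → ℝ) :
    (∀ k : Fin n, gibbs n ε μ β (jwA n k) = 0) ∧
    (∀ k : Fin n, gibbs n ε μ β (jwA n k)ᴴ = 0) ∧
    (∀ k : Fin n, gibbs n ε μ β (numOp n k)
      = ((1 / (1 + Real.exp (β * (ε k - μ))) : ℝ) : ℂ)) ∧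
    (∀ A : Fin n → FermionAlg n,
      (∀ k : Fin n, A k ∈ Submodule.span ℂ
        ({1, jwA n k, (jwA n k)ᴴ, numOp n k} : Set (FermionAlg n))) →
      gibbs n ε μ β (List.ofFn A).prod = ∏ k : Fin n, gibbs n ε μ β (A k)) :=
  gibbs_state_values_and_factorization_general n β μ ε
end

section
/- Under the detailed-balance assumptions, the Gibbs state ρ is D-invariant: ρ(D(A)) = 0 for every homogeneous A ∈ M_m(ℂ). -/
/-!
Write `τ X = tr (e^{-βF} X)`. The eigenoperator relation gives
`e^{-βF} L_γ = e^{-βε_γ} L_γ e^{-βF}`, so `τ (L_γ X) = e^{-βε_γ} τ (X L_γ)`; combined with the KMS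
relation `L_γ Y L_γᴴ = e^{-βε_γ} L_γ̄ᴴ Y L_γ̄` this gives `τ (L_γ̄ᴴ X L_γ̄ Y) = τ (X L_γᴴ Y L_γ)`.
After reindexing by the involution `γ ↦ γ̄`, each half `∑ τ (L_γᴴ L_γ A)` and `∑ τ (A L_γᴴ L_γ)` of
the anticommutator term equals the jump term `∑ τ (L_γᴴ A L_γ)`, so `τ (D A) = 0` when `A` is even
and all signs are `1`. When `A` is odd, `D A` is odd while `e^{-βF}` is even, and the trace of an
odd matrix vanishes because conjugation by `G` preserves the trace.
-/

open Matrix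

theorem NormedSpace.exp_smul_mul_eq_of_mul_sub_mul_eq_smul {𝔸 : Type*} [NormedRing 𝔸]
    [NormedAlgebra ℂ 𝔸] [CompleteSpace 𝔸] {F L : 𝔸} {ε : ℂ} (h : F * L - L * F = ε • L)
    (t : ℂ) : exp (t • F) * L = Complex.exp (t * ε) • (L * exp (t • F)) := by
  let := NormedAlgebra.restrictScalars ℚ ℂ 𝔸
  have hsemi : SemiconjBy L (t • F + (t * ε) • 1) (t • F) := by
    rw [SemiconjBy, smul_mul_assoc, sub_eq_iff_eq_add.mp h, mul_add, mul_smul_comm,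
      mul_smul_comm, mul_one]
    module
  have hcomm : Commute (t • F) ((t * ε) • (1 : 𝔸)) :=
    ((Commute.one_right F).smul_left t).smul_right _
  rw [← hsemi.exp_right.eq, exp_add_of_commute hcomm, ← Algebra.algebraMap_eq_smul_one,
    ← algebraMap_exp_comm, Algebra.algebraMap_eq_smul_one, ← Complex.exp_eq_exp_ℂ,
    mul_smul_one, mul_smul_comm]

namespace Matrix

variable {n : Type*} [Fintype n] [DecidableEq n]

section Grading

variable {R : Type*} [CommRing R] {G X Y : Matrix n n R} {s t : R}

/-- Graded by the sign `(-1) ^ d` rather than by the degree `d`, since only its parity matters. -/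
def homogeneousPart (G : Matrix n n R) (s : R) : Submodule R (Matrix n n R) :=
  Module.End.eigenspace (LinearMap.mulLeftRight R (G, G)) s

theorem mem_homogeneousPart : X ∈ homogeneousPart G s ↔ G * X * G = s • X :=
  Module.End.mem_eigenspace_iff

theorem one_mem_homogeneousPart (hG : G * G = 1) : 1 ∈ homogeneousPart G 1 := by
  rw [mem_homogeneousPart, Matrix.mul_one, hG, one_smul]

theorem mem_homogeneousPart_one_iff (hG : G * G = 1) :
    X ∈ homogeneousPart G 1 ↔ Commute G X := by
  rw [mem_homogeneousPart, one_smul]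
  constructor
  · intro h
    calc G * X = G * X * G * G := by rw [Matrix.mul_assoc _ G, hG, Matrix.mul_one]
      _ = X * G := by rw [h]
  · intro h
    rw [h.eq, Matrix.mul_assoc, hG, Matrix.mul_one]

theorem mul_mem_homogeneousPart (hG : G * G = 1) (hX : X ∈ homogeneousPart G s)
    (hY : Y ∈ homogeneousPart G t) : X * Y ∈ homogeneousPart G (s * t) := by
  rw [mem_homogeneousPart] at *
  calc G * (X * Y) * G = (G * X * G) * (G * Y * G) := by
        simp only [Matrix.mul_assoc, ← Matrix.mul_assoc G G, hG, Matrix.one_mul]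
    _ = (s * t) • (X * Y) := by rw [hX, hY, smul_mul_smul_comm]

theorem conjTranspose_mem_homogeneousPart [StarRing R] (hG : Gᴴ = G)
    (hX : X ∈ homogeneousPart G s) : Xᴴ ∈ homogeneousPart G (star s) := by
  rw [mem_homogeneousPart] at *
  rw [← conjTranspose_smul, ← hX, conjTranspose_mul, conjTranspose_mul, hG, Matrix.mul_assoc]

theorem conjTranspose_mul_mul_mem_homogeneousPart [StarRing R] (hGG : G * G = 1) (hG : Gᴴ = G)
    {L : Matrix n n R} (hL : L ∈ homogeneousPart G s) (hs : star s * s = 1)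
    (hX : X ∈ homogeneousPart G t) : Lᴴ * X * L ∈ homogeneousPart G t := by
  have h := mul_mem_homogeneousPart hGG
    (mul_mem_homogeneousPart hGG (conjTranspose_mem_homogeneousPart hG hL) hX) hL
  rwa [mul_right_comm, hs, one_mul] at h

theorem trace_eq_zero_of_mem_homogeneousPart [IsDomain R] (hG : G * G = 1)
    (hX : X ∈ homogeneousPart G s) (hs : s ≠ 1) : X.trace = 0 := by
  have h : s * X.trace = X.trace := by
    rw [← smul_eq_mul, ← trace_smul, ← mem_homogeneousPart.mp hX, trace_mul_cycle, hG,
      Matrix.one_mul]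
  have : (s - 1) * X.trace = 0 := by rw [sub_mul, h, one_mul, sub_self]
  exact (mul_eq_zero.mp this).resolve_left (sub_ne_zero.mpr hs)

end Grading

section DetailedBalance

variable {R : Type*} [CommRing R]

theorem trace_mul_mul_of_mul_eq_smul_mul {E L : Matrix n n R} {c : R}
    (h : E * L = c • (L * E)) (X : Matrix n n R) :
    trace (E * (L * X)) = c * trace (E * (X * L)) := by
  rw [← Matrix.mul_assoc, h, smul_mul_assoc, trace_smul, smul_eq_mul, Matrix.mul_assoc,
    trace_mul_comm, Matrix.mul_assoc]

variable {𝕜 : Type*} [RCLike 𝕜]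

theorem trace_mul_conjTranspose_mul_mul_mul_of_kms {E L L' : Matrix n n 𝕜} {k : 𝕜} (hk : k ≠ 0)
    (hEL : E * L = (star k * k) • (L * E)) (hKMS : Lᴴ = k • L') (X Y : Matrix n n 𝕜) :
    trace (E * (L'ᴴ * X * L' * Y)) = trace (E * (X * Lᴴ * Y * L)) := by
  have hL : L = star k • L'ᴴ := by
    rw [← conjTranspose_conjTranspose L, hKMS, conjTranspose_smul]
  have hck : star k * k ≠ 0 := mul_ne_zero (star_ne_zero.mpr hk) hk
  have h : trace (E * (L * (X * Lᴴ * Y))) = (star k * k) * trace (E * (L'ᴴ * X * L' * Y)) := by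
    rw [hKMS, hL]
    simp only [Matrix.smul_mul, Matrix.mul_smul, trace_smul, smul_eq_mul, Matrix.mul_assoc]
    ring
  rw [trace_mul_mul_of_mul_eq_smul_mul hEL] at h
  exact (mul_left_cancel₀ hck h).symm

end DetailedBalance

section Dissipator

variable {𝕜 J : Type*} [RCLike 𝕜] [Fintype J]

def dissipator (L : J → Matrix n n 𝕜) (d : J → ℕ) (A : Matrix n n 𝕜) (dA : ℕ) : Matrix n n 𝕜 :=
  ∑ γ, ((1 / 2 : 𝕜) • ((L γ)ᴴ * L γ * A + A * ((L γ)ᴴ * L γ))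
    - ((-1 : 𝕜) ^ (d γ * dA)) • ((L γ)ᴴ * A * L γ))

theorem trace_mul_dissipator_eq_zero_of_even {bar : J → J} (hbar : Function.Involutive bar)
    {E A : Matrix n n 𝕜} {L : J → Matrix n n 𝕜} {d : J → ℕ} {dA : ℕ} (hdA : Even dA)
    (hbalance : ∀ γ X Y, trace (E * ((L (bar γ))ᴴ * X * L (bar γ) * Y))
      = trace (E * (X * (L γ)ᴴ * Y * L γ))) :
    trace (E * dissipator L d A dA) = 0 := by
  have hleft : ∑ γ, trace (E * ((L γ)ᴴ * L γ * A)) = ∑ γ, trace (E * ((L γ)ᴴ * A * L γ)) :=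
    (Equiv.sum_comp hbar.toPerm _).symm.trans
      (Finset.sum_congr rfl fun γ _ ↦ by simpa using hbalance γ 1 A)
  have hright : ∑ γ, trace (E * (A * ((L γ)ᴴ * L γ))) = ∑ γ, trace (E * ((L γ)ᴴ * A * L γ)) :=
    calc ∑ γ, trace (E * (A * ((L γ)ᴴ * L γ)))
        = ∑ γ, trace (E * ((L (bar γ))ᴴ * A * L (bar γ))) :=
          Finset.sum_congr rfl fun γ _ ↦ by simpa [Matrix.mul_assoc] using (hbalance γ A 1).symm
      _ = ∑ γ, trace (E * ((L γ)ᴴ * A * L γ)) :=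
          Equiv.sum_comp hbar.toPerm fun γ ↦ trace (E * ((L γ)ᴴ * A * L γ))
  rw [dissipator, Finset.mul_sum, trace_sum]
  simp only [(hdA.mul_left _).neg_one_pow, one_smul, mul_sub, mul_smul_comm, mul_add, trace_sub,
    trace_smul, trace_add, smul_eq_mul]
  rw [Finset.sum_sub_distrib, Finset.sum_add_distrib, ← Finset.mul_sum, ← Finset.mul_sum, hleft,
    hright]
  ring

theorem trace_mul_dissipator_eq_zero_of_odd {G E A : Matrix n n 𝕜} (hGG : G * G = 1) (hG : Gᴴ = G)
    (hE : E ∈ homogeneousPart G 1) {L : J → Matrix n n 𝕜} {d : J → ℕ}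
    (hL : ∀ γ, L γ ∈ homogeneousPart G ((-1) ^ d γ)) {dA : ℕ}
    (hA : A ∈ homogeneousPart G ((-1) ^ dA)) (hdA : Odd dA) :
    trace (E * dissipator L d A dA) = 0 := by
  have hsign : ∀ j : ℕ, star ((-1 : 𝕜) ^ j) * (-1) ^ j = 1 := fun j ↦ by
    rw [star_pow, star_neg, star_one, ← mul_pow, neg_one_mul, neg_neg, one_pow]
  have hM : ∀ γ, (L γ)ᴴ * L γ ∈ homogeneousPart G 1 := fun γ ↦ by
    simpa using conjTranspose_mul_mul_mem_homogeneousPart hGG hG (hL γ) (hsign _)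
      (one_mem_homogeneousPart hGG)
  have hD : dissipator L d A dA ∈ homogeneousPart G ((-1) ^ dA) :=
    Submodule.sum_mem _ fun γ _ ↦ Submodule.sub_mem _
      (Submodule.smul_mem _ _ (Submodule.add_mem _
        (one_mul ((-1 : 𝕜) ^ dA) ▸ mul_mem_homogeneousPart hGG (hM γ) hA)
        (mul_one ((-1 : 𝕜) ^ dA) ▸ mul_mem_homogeneousPart hGG hA (hM γ))))
      (Submodule.smul_mem _ _
        (conjTranspose_mul_mul_mem_homogeneousPart hGG hG (hL γ) (hsign _) hA))
  refine trace_eq_zero_of_mem_homogeneousPart hGG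
    (one_mul ((-1 : 𝕜) ^ dA) ▸ mul_mem_homogeneousPart hGG hE hD) ?_
  rw [hdA.neg_one_pow]
  norm_num

end Dissipator

end Matrix

theorem gibbs_dissipator_invariant_general
    (m : ℕ) (β : ℝ)
    (F : Matrix (Fin m) (Fin m) ℂ)
    (G : Matrix (Fin m) (Fin m) ℂ) (hGsa : Gᴴ = G) (hGunit : G * G = 1)
    (hGF : G * F * G = F)
    (J : Type*) [Fintype J]
    (bar : J → J) (hbar : ∀ γ, bar (bar γ) = γ)
    (ε : J → ℝ)
    (L : J → Matrix (Fin m) (Fin m) ℂ)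
    (d : J → ℕ)
    (hLhom : ∀ γ, G * L γ * G = ((-1 : ℂ) ^ (d γ)) • L γ)
    (hLeig : ∀ γ, F * L γ - L γ * F = ((ε γ : ℝ) : ℂ) • L γ)
    (hLKMS : ∀ γ, (L γ)ᴴ = ((Real.exp (-(β * ε γ) / 2) : ℝ) : ℂ) • L (bar γ))
    (A : Matrix (Fin m) (Fin m) ℂ) (dA : ℕ)
    (hA : G * A * G = ((-1 : ℂ) ^ dA) • A) :
    (NormedSpace.exp ((-(β : ℂ)) • F) *
        (∑ γ, ((1 / 2 : ℂ) • ((L γ)ᴴ * L γ * A + A * ((L γ)ᴴ * L γ))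
          - ((-1 : ℂ) ^ (d γ * dA)) • ((L γ)ᴴ * A * L γ)))).trace /
      (NormedSpace.exp ((-(β : ℂ)) • F)).trace = 0 := by
  refine div_eq_zero_iff.mpr (Or.inl ?_)
  rcases Nat.even_or_odd dA with hdA | hdA
  · refine trace_mul_dissipator_eq_zero_of_even hbar hdA fun γ ↦
      trace_mul_conjTranspose_mul_mul_mul_of_kms (Complex.ofReal_ne_zero.mpr (Real.exp_pos _).ne')
        ?_ (hLKMS γ)
    have hk : star ((Real.exp (-(β * ε γ) / 2) : ℝ) : ℂ) * (Real.exp (-(β * ε γ) / 2) : ℝ)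
        = Complex.exp (-β * ε γ) := by
      rw [Complex.star_def, Complex.conj_ofReal, ← Complex.ofReal_mul, ← Real.exp_add,
        Complex.ofReal_exp]
      push_cast
      congr 1
      ring
    rw [hk]
    exact open scoped Matrix.Norms.Operator in
      NormedSpace.exp_smul_mul_eq_of_mul_sub_mul_eq_smul (hLeig γ) _
  · have hF : F ∈ homogeneousPart G 1 := mem_homogeneousPart.mpr (by rw [hGF, one_smul])
    have hE : NormedSpace.exp ((-(β : ℂ)) • F) ∈ homogeneousPart G 1 :=
      (mem_homogeneousPart_one_iff hGunit).mpr
        (((mem_homogeneousPart_one_iff hGunit).mp hF).smul_right _).exp_right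
    exact trace_mul_dissipator_eq_zero_of_odd hGunit hGsa hE (fun γ ↦ mem_homogeneousPart.mpr (hLhom γ))
      (mem_homogeneousPart.mpr hA) hdA

/-- Let `F ∈ M_m(ℂ)` be self-adjoint, `ρ` the associated Gibbs state at
inverse temperature `β`, `G` a self-adjoint grading unitary commuting with `F`, and
`(L γ)_{γ ∈ J}` a finite family of homogeneous jump operators satisfying the eigenoperator
relation `FL_γ − L_γF = ε_γ L_γ` and the β-KMS (detailed balance) relation
`L_γᴴ = e^{−βε_γ/2} L_γ̄` for an involution `γ ↦ γ̄` with `ε_γ̄ = −ε_γ`, `d_γ̄ = d_γ`.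
Then the Gibbs state is `D`-invariant: `ρ(D(A)) = 0` for every homogeneous `A`, where
`D(A) = Σ_γ ( ½(L_γᴴ L_γ A + A L_γᴴ L_γ) − (−1)^{d_γ d_A} L_γᴴ A L_γ )`. -/
theorem gibbs_dissipator_invariant
    (m : ℕ) (hm : 1 ≤ m) (β : ℝ) (hβ : 0 < β)
    (F : Matrix (Fin m) (Fin m) ℂ) (hF : Fᴴ = F)
    (G : Matrix (Fin m) (Fin m) ℂ) (hGsa : Gᴴ = G) (hGunit : G * G = 1)
    (hGF : G * F * G = F)
    (J : Type*) [Fintype J]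
    (bar : J → J) (hbar : ∀ γ, bar (bar γ) = γ)
    (ε : J → ℝ) (hε : ∀ γ, ε (bar γ) = -ε γ)
    (L : J → Matrix (Fin m) (Fin m) ℂ)
    (d : J → ℕ) (hd : ∀ γ, d γ ≤ 1) (hdbar : ∀ γ, d (bar γ) = d γ)
    (hLhom : ∀ γ, G * L γ * G = ((-1 : ℂ) ^ (d γ)) • L γ)
    (hLeig : ∀ γ, F * L γ - L γ * F = ((ε γ : ℝ) : ℂ) • L γ)
    (hLKMS : ∀ γ, (L γ)ᴴ = ((Real.exp (-(β * ε γ) / 2) : ℝ) : ℂ) • L (bar γ))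
    (A : Matrix (Fin m) (Fin m) ℂ) (dA : ℕ) (hdA : dA ≤ 1)
    (hA : G * A * G = ((-1 : ℂ) ^ dA) • A) :
    (NormedSpace.exp ((-(β : ℂ)) • F) *
        (∑ γ, ((1 / 2 : ℂ) • ((L γ)ᴴ * L γ * A + A * ((L γ)ᴴ * L γ))
          - ((-1 : ℂ) ^ (d γ * dA)) • ((L γ)ᴴ * A * L γ)))).trace /
      (NormedSpace.exp ((-(β : ℂ)) • F)).trace = 0 :=
  gibbs_dissipator_invariant_general m β F G hGsa hGunit hGF J bar hbar ε L d hLhom hLeig hLKMS A dA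
    hA
end
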